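/- The vector fields X = ∂₂ + (λ − u₃)∂₃ and Y = ∂₁ + (λ² − λu₃ + u₂)∂₃ commute for all values of λ if and only if u satisfies u₂₂ + u₁₃ + u₂u₃₃ − u₃u₂₃ = 0. -/

import Mathlib

/-- Partial derivative in the `i`-th coordinate direction. -/
noncomputable def pd (i : Fin 3) (f : (Fin 3 → ℝ) → ℝ) (x : Fin 3 → ℝ) : ℝ :=
  fderiv ℝ f x (Pi.single i 1)

/-- Lie bracket of vector fields on `ℝ³`, given by their coefficient functions. -/
noncomputable def lieBracket (X Y : (Fin 3 → ℝ) → Fin 3 → ℝ)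
    (x : Fin 3 → ℝ) (i : Fin 3) : ℝ :=
  ∑ j : Fin 3, (X x j * pd j (fun y => Y y i) x - Y x j * pd j (fun y => X y i) x)

/-! The third component of `[X, Y]` equals the PDE expression identically in `λ`: the terms in
`λ` and `λ²` cancel once `u₂₃ = u₃₂`. The first two components vanish because the coefficients
of `∂₁` and `∂₂` are constant. -/

section PartialDerivatives

variable {f g : (Fin 3 → ℝ) → ℝ} {x : Fin 3 → ℝ}

@[simp]
lemma pd_const (i : Fin 3) (c : ℝ) : pd i (fun _ => c) x = 0 := by
  simp [pd]

lemma pd_const_sub (i : Fin 3) (c : ℝ) : pd i (fun y => c - f y) x = -pd i f x := by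
  simp [pd, fderiv_const_sub]

lemma pd_const_mul (i : Fin 3) (c : ℝ) (hf : DifferentiableAt ℝ f x) :
    pd i (fun y => c * f y) x = c * pd i f x := by
  simp [pd, fderiv_const_mul hf]

lemma pd_add (i : Fin 3) (hf : DifferentiableAt ℝ f x) (hg : DifferentiableAt ℝ g x) :
    pd i (fun y => f y + g y) x = pd i f x + pd i g x := by
  simp [pd, fderiv_fun_add hf hg]

lemma ContDiff.differentiable_pd (hf : ContDiff ℝ 2 f) (i : Fin 3) : Differentiable ℝ (pd i f) :=
  fun x => ((hf.fderiv_right (m := 1) (by norm_num)).differentiable (by norm_num) x).clm_apply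
    (differentiableAt_const _)

lemma pd_pd_eq_fderiv_fderiv (hf : DifferentiableAt ℝ (fderiv ℝ f) x) (i j : Fin 3) :
    pd i (pd j f) x = fderiv ℝ (fderiv ℝ f) x (Pi.single i 1) (Pi.single j 1) := by
  change fderiv ℝ (fun y => fderiv ℝ f y (Pi.single j 1)) x (Pi.single i 1) = _
  simp [fderiv_clm_apply hf (differentiableAt_const _)]

lemma ContDiff.pd_pd_comm (hf : ContDiff ℝ 2 f) (i j : Fin 3) (x : Fin 3 → ℝ) :
    pd i (pd j f) x = pd j (pd i f) x := by
  have hdf : DifferentiableAt ℝ (fderiv ℝ f) x :=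
    (hf.fderiv_right (m := 1) (by norm_num)).differentiable (by norm_num) x
  rw [pd_pd_eq_fderiv_fderiv hdf, pd_pd_eq_fderiv_fderiv hdf]
  exact hf.contDiffAt.isSymmSndFDerivAt (by simp) _ _

end PartialDerivatives

section ConstantFirstComponents

variable {a b c d : ℝ} {f g : (Fin 3 → ℝ) → ℝ} {x : Fin 3 → ℝ}

lemma lieBracket_const_const_apply_of_ne_two {i : Fin 3} (hi : i ≠ 2) :
    lieBracket (fun y => ![a, b, f y]) (fun y => ![c, d, g y]) x i = 0 := by
  fin_cases i <;> simp_all [lieBracket]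

lemma lieBracket_const_const_apply_two :
    lieBracket (fun y => ![a, b, f y]) (fun y => ![c, d, g y]) x 2 =
      a * pd 0 g x + b * pd 1 g x + f x * pd 2 g x
        - (c * pd 0 f x + d * pd 1 f x + g x * pd 2 f x) := by
  simp [lieBracket, Fin.sum_univ_three]

end ConstantFirstComponents

/-- The vector fields `X = ∂₂ + (λ − u₃)∂₃` and `Y = ∂₁ + (λ² − λu₃ + u₂)∂₃`
commute for all values of `λ` iff `u` satisfies
`u₂₂ + u₁₃ + u₂u₃₃ − u₃u₂₃ = 0`. -/
theorem lax_pair_123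
    (u : (Fin 3 → ℝ) → ℝ) (hu : ContDiff ℝ 2 u) :
    (∀ l : ℝ, ∀ x, ∀ i : Fin 3,
      lieBracket
        (fun x => ![0, 1, l - pd 2 u x])
        (fun x => ![1, 0, l ^ 2 - l * pd 2 u x + pd 1 u x])
        x i = 0) ↔
    (∀ x, pd 1 (pd 1 u) x + pd 0 (pd 2 u) x + pd 1 u x * pd 2 (pd 2 u) x
        - pd 2 u x * pd 1 (pd 2 u) x = 0) := by
  have hu₂ := hu.differentiable_pd 1
  have hu₃ := hu.differentiable_pd 2
  have bracket_two : ∀ l x,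
      lieBracket (fun x => ![0, 1, l - pd 2 u x])
        (fun x => ![1, 0, l ^ 2 - l * pd 2 u x + pd 1 u x]) x 2 =
      pd 1 (pd 1 u) x + pd 0 (pd 2 u) x + pd 1 u x * pd 2 (pd 2 u) x
        - pd 2 u x * pd 1 (pd 2 u) x := by
    intro l x
    simp only [lieBracket_const_const_apply_two, pd_const_sub,
      pd_add _ ((hu₃.const_mul l).const_sub _ x) (hu₂ x), pd_const_mul _ _ (hu₃ x),
      hu.pd_pd_comm 2 1 x]
    ring
  constructor
  · intro h x
    rw [← bracket_two 0 x]
    exact h 0 x 2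
  · intro h l x i
    by_cases hi : i = 2
    · subst hi
      exact (bracket_two l x).trans (h x)
    · exact lieBracket_const_const_apply_of_ne_two hi
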